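/- Under the assumptions of the invariant-measure representation, the division rate can be recovered from the invariant measure: for a.e. y > 0 with E_ν[(1/τ₀) 1_{ξ₀ ≤ y, ξ₁ ≥ y/2}] > 0, one has B(y) = (y/2) · ν(y/2) / E_ν[(1/τ₀) 1_{ξ₀ ≤ y, ξ₁ ≥ y/2}]. -/

import Mathlib

/-!
Testing the invariance equation against functions of the size alone shows that the size
marginal of `ν` has density `x' ↦ ∫ offspringDens B ξ₀ τ₀ x' dν`, so this density agrees with
`νm` almost everywhere, also at `x' = y / 2` for a.e. `y`. At `x' = y / 2` the offspring density
factors as `2 B(y) / y` times `(1/τ₀) 1_{ξ₀ ≤ y} P(ξ₁ ≥ y/2 | ξ₀, τ₀)`: the tail probability is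
`exp (-∫_{ξ₀/2}^{y/2} B(2s)/(τ₀ s) ds)`, which is the fundamental theorem of calculus together
with the divergence of the cumulative hazard. Integrating in `ν` gives
`νm (y/2) = (2 B(y) / y) E_ν[(1/τ₀) 1_{ξ₀ ≤ y, ξ₁ ≥ y/2}]`.
-/

open MeasureTheory Set Filter
open scoped ENNReal Topology

/-- Density of the offspring's size at birth `x'` given the parent's size at birth `x`
and growth rate `v`, for the division rate `B`. -/
noncomputable def offspringDens (B : ℝ → ℝ) (x v x' : ℝ) : ℝ :=
  if x / 2 ≤ x' then
    B (2 * x') / (v * x') *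
      Real.exp (-(∫ s in Set.Ioc (x / 2) x', B (2 * s) / (v * s)))
  else 0

theorem measurable_setIntegral_Ioc {α : Type*} [MeasurableSpace α] {f : α → ℝ → ℝ}
    (hf : Measurable (Function.uncurry f)) {a b : α → ℝ} (ha : Measurable a)
    (hb : Measurable b) :
    Measurable fun z => ∫ s in Ioc (a z) (b z), f z s := by
  have hset : MeasurableSet {q : α × ℝ | q.2 ∈ Ioc (a q.1) (b q.1)} :=
    (measurableSet_lt (ha.comp measurable_fst) measurable_snd).inter
      (measurableSet_le measurable_snd (hb.comp measurable_fst))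
  have hind : StronglyMeasurable fun q : α × ℝ => (Ioc (a q.1) (b q.1)).indicator (f q.1) q.2 :=
    (hf.indicator hset).stronglyMeasurable
  simp_rw [← integral_indicator measurableSet_Ioc]
  exact hind.integral_prod_right'.measurable

theorem tendsto_intervalIntegral_atTop_of_lintegral_eq_top {h : ℝ → ℝ} {c : ℝ}
    (hcont : ContinuousOn h (Ici c)) (hnn : ∀ s ∈ Ioi c, 0 ≤ h s)
    (htop : ∫⁻ s in Ioi c, ENNReal.ofReal (h s) = ⊤) :
    Tendsto (fun t => ∫ s in c..t, h s) atTop atTop := by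
  set μ := volume.withDensity fun s => ENNReal.ofReal (h s)
  have hμ : Tendsto (fun t => μ (Ioc c t)) atTop (𝓝 ⊤) := by
    have := tendsto_measure_iUnion_atTop (μ := μ)
      (fun _ _ hst => Ioc_subset_Ioc_right hst : Monotone (Ioc c))
    rwa [iUnion_Ioc_right, withDensity_apply _ measurableSet_Ioi, htop] at this
  rw [← ENNReal.tendsto_ofReal_nhds_top]
  refine hμ.congr' ?_
  filter_upwards [eventually_ge_atTop c] with t hct
  rw [withDensity_apply _ measurableSet_Ioc, intervalIntegral.integral_of_le hct,
    ofReal_integral_eq_lintegral_ofReal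
      ((hcont.mono Icc_subset_Ici_self).integrableOn_Icc.mono_set Ioc_subset_Icc_self)]
  filter_upwards [ae_restrict_mem measurableSet_Ioc] with s hs
  exact hnn s hs.1

theorem integral_Ioi_mul_exp_neg_primitive {h : ℝ → ℝ} {c a : ℝ} (hcont : ContinuousOn h (Ici c))
    (hnn : ∀ s ∈ Ioi c, 0 ≤ h s) (htop : Tendsto (fun t => ∫ s in c..t, h s) atTop atTop)
    (hca : c ≤ a) :
    ∫ t in Ioi a, h t * Real.exp (-∫ s in c..t, h s) = Real.exp (-∫ s in c..a, h s) := by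
  set J := fun t => ∫ s in c..t, h s
  have hJd : ∀ t ∈ Ioi a, HasDerivAt J (h t) t := fun t ht =>
    have hct : c < t := hca.trans_lt ht
    intervalIntegral.integral_hasDerivAt_right
      ((hcont.mono Icc_subset_Ici_self).intervalIntegrable_of_Icc hct.le)
      ((hcont.mono Ioi_subset_Ici_self).stronglyMeasurableAtFilter isOpen_Ioi t hct)
      (hcont.continuousAt (Ici_mem_nhds hct))
  have hJc : ContinuousWithinAt J (Ici a) a := by
    have hIcc : ContinuousOn J (Icc c (a + 1)) := by
      have hca' : c ≤ a + 1 := by linarith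
      rw [← uIcc_of_le hca']
      refine intervalIntegral.continuousOn_primitive_interval ?_
      rw [uIcc_of_le hca']
      exact (hcont.mono Icc_subset_Ici_self).integrableOn_Icc
    exact (hIcc a ⟨hca, by linarith⟩).mono_of_mem_nhdsWithin
      (mem_of_superset (Icc_mem_nhdsGE (lt_add_one a)) (Icc_subset_Icc_left hca))
  have hlim : Tendsto (fun t => -Real.exp (-J t)) atTop (𝓝 0) := by
    simpa using (Real.tendsto_exp_neg_atTop_nhds_zero.comp htop).neg
  have hFTC := integral_Ioi_of_hasDerivAt_of_nonneg (hJc.neg.rexp.neg)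
    (fun t ht => ((hJd t ht).neg.exp.neg).congr_deriv (by ring))
    (fun t ht => mul_nonneg (hnn t (hca.trans_lt ht)) (Real.exp_pos _).le) hlim
  simpa using hFTC

theorem map_fst_eq_withDensity_of_invariant {ν : Measure (ℝ × ℝ)} [SFinite ν]
    {ρ : ℝ → Measure ℝ} (hρ : ∀ᵐ p ∂ν, ρ p.2 univ = 1) {k : ℝ × ℝ → ℝ → ℝ≥0∞}
    (hk : Measurable (Function.uncurry k))
    (hinv : ∀ f : ℝ × ℝ → ℝ≥0∞, Measurable f →
      ∫⁻ p, f p ∂ν = ∫⁻ p, (∫⁻ x' in Ioi (0 : ℝ), (∫⁻ v', f (x', v') ∂(ρ p.2)) * k p x') ∂ν) :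
    ν.map Prod.fst = (volume.restrict (Ioi 0)).withDensity fun x' => ∫⁻ p, k p x' ∂ν := by
  ext A hA
  have hA' : MeasurableSet (Prod.fst ⁻¹' A : Set (ℝ × ℝ)) := measurable_fst hA
  calc ν.map Prod.fst A
      = ∫⁻ p, (Prod.fst ⁻¹' A).indicator 1 p ∂ν := by
        rw [Measure.map_apply measurable_fst hA, lintegral_indicator_one hA']
    _ = ∫⁻ p, ∫⁻ x' in A, k p x' ∂volume.restrict (Ioi 0) ∂ν := by
        rw [hinv _ (measurable_one.indicator hA')]
        refine lintegral_congr_ae (hρ.mono fun p hp => ?_)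
        dsimp only
        rw [← lintegral_indicator hA]
        refine lintegral_congr fun x' => ?_
        by_cases hx : x' ∈ A <;> simp [hx, hp]
    _ = ∫⁻ x' in A, ∫⁻ p, k p x' ∂ν ∂volume.restrict (Ioi 0) :=
        lintegral_lintegral_swap hk.aemeasurable
    _ = _ := (withDensity_apply _ hA).symm

theorem ae_restrict_Ioi_zero_div {P : ℝ → Prop} {c : ℝ} (hc : 0 < c)
    (h : ∀ᵐ a ∂volume.restrict (Ioi 0), P a) : ∀ᵐ y ∂volume.restrict (Ioi 0), P (y / c) := by
  rw [ae_restrict_iff' measurableSet_Ioi] at h ⊢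
  filter_upwards [(Measure.quasiMeasurePreserving_smul volume (inv_ne_zero hc.ne')).ae h]
    with y hy hy0
  simpa only [smul_eq_mul, inv_mul_eq_div] using hy (mul_pos (inv_pos.2 hc) hy0)

theorem measurable_offspringDens {B : ℝ → ℝ} (hB : Measurable B) :
    Measurable fun q : (ℝ × ℝ) × ℝ => offspringDens B q.1.1 q.1.2 q.2 := by
  have hrate : Measurable fun r : (ℝ × ℝ) × ℝ => B (2 * r.2) / (r.1.2 * r.2) :=
    (hB.comp (measurable_const.mul measurable_snd)).div (measurable_fst.snd.mul measurable_snd)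
  refine Measurable.ite (measurableSet_le (measurable_fst.fst.div_const 2) measurable_snd)
    (hrate.mul (Real.measurable_exp.comp (Measurable.neg ?_))) measurable_const
  exact measurable_setIntegral_Ioc (f := fun q s => B (2 * s) / (q.1.2 * s))
    ((hB.comp (measurable_const.mul measurable_snd)).div
      (measurable_fst.fst.snd.mul measurable_snd))
    (measurable_fst.fst.div_const 2) measurable_snd

theorem offspringDens_nonneg {B : ℝ → ℝ} (hBnn : ∀ x, 0 ≤ B x) (x : ℝ) {v x' : ℝ} (hv : 0 ≤ v)
    (hx' : 0 ≤ x') : 0 ≤ offspringDens B x v x' := by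
  unfold offspringDens
  split_ifs
  · exact mul_nonneg (div_nonneg (hBnn _) (mul_nonneg hv hx')) (Real.exp_pos _).le
  · exact le_rfl

theorem integral_Ici_offspringDens {B : ℝ → ℝ} (hBc : Continuous B) (hBnn : ∀ x, 0 ≤ B x)
    {x v a : ℝ} (hx : 0 < x) (hv : 0 < v)
    (hdiv : ∫⁻ s in Ioi (x / 2), ENNReal.ofReal (B (2 * s) / s) = ⊤) (ha : x / 2 ≤ a) :
    ∫ x' in Ici a, offspringDens B x v x' =
      Real.exp (-∫ s in Ioc (x / 2) a, B (2 * s) / (v * s)) := by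
  set h := fun s => B (2 * s) / (v * s)
  have hcont : ContinuousOn h (Ici (x / 2)) := fun s hs =>
    (hBc.comp (continuous_const.mul continuous_id)).continuousWithinAt.div
      (continuous_const.mul continuous_id).continuousWithinAt
      (mul_pos hv ((half_pos hx).trans_le hs)).ne'
  have hnn : ∀ s ∈ Ioi (x / 2), 0 ≤ h s := fun s hs =>
    div_nonneg (hBnn _) (mul_pos hv ((half_pos hx).trans hs)).le
  have htop : ∫⁻ s in Ioi (x / 2), ENNReal.ofReal (h s) = ⊤ := by
    have hfac : ∀ s, ENNReal.ofReal (h s) = ENNReal.ofReal v⁻¹ * ENNReal.ofReal (B (2 * s) / s) :=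
      fun s => by
        rw [← ENNReal.ofReal_mul (inv_nonneg.2 hv.le)]; congr 1; simp only [h]; field_simp
    simp_rw [hfac]
    rw [lintegral_const_mul' _ _ ENNReal.ofReal_ne_top, hdiv,
      ENNReal.mul_top (by simpa using hv)]
  have hJ : ∀ t, x / 2 ≤ t → ∫ s in Ioc (x / 2) t, h s = ∫ s in x / 2..t, h s := fun t ht =>
    (intervalIntegral.integral_of_le ht).symm
  rw [integral_Ici_eq_integral_Ioi, hJ a ha, ← integral_Ioi_mul_exp_neg_primitive hcont hnn
    (tendsto_intervalIntegral_atTop_of_lintegral_eq_top hcont hnn htop) ha]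
  refine setIntegral_congr_fun measurableSet_Ioi fun t ht => ?_
  rw [offspringDens, if_pos (ha.trans ht.le), hJ t (ha.trans ht.le)]

/-- The integrand of `E_ν[(1/τ₀) 1_{ξ₀ ≤ y, ξ₁ ≥ y/2}]`, at the parent state `p = (ξ₀, τ₀)`. -/
noncomputable def survivalWeight (B : ℝ → ℝ) (y : ℝ) (p : ℝ × ℝ) : ℝ :=
  if p.1 ≤ y then (1 / p.2) * ∫ x' in Ici (y / 2), offspringDens B p.1 p.2 x' else 0

theorem survivalWeight_nonneg {B : ℝ → ℝ} (hBnn : ∀ x, 0 ≤ B x) {y : ℝ} (hy : 0 ≤ y)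
    {p : ℝ × ℝ} (hv : 0 ≤ p.2) : 0 ≤ survivalWeight B y p := by
  unfold survivalWeight
  split_ifs
  · exact mul_nonneg (one_div_nonneg.2 hv) (setIntegral_nonneg measurableSet_Ici fun x' hx' =>
      offspringDens_nonneg hBnn _ hv ((by positivity : (0 : ℝ) ≤ y / 2).trans hx'))
  · exact le_rfl

theorem offspringDens_half_eq {B : ℝ → ℝ} (hBc : Continuous B) (hBnn : ∀ x, 0 ≤ B x)
    {y : ℝ} (hy : 0 < y) {p : ℝ × ℝ} (hx : 0 < p.1) (hv : 0 < p.2)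
    (hdiv : ∫⁻ s in Ioi (p.1 / 2), ENNReal.ofReal (B (2 * s) / s) = ⊤) :
    offspringDens B p.1 p.2 (y / 2) = 2 * B y / y * survivalWeight B y p := by
  unfold survivalWeight
  split_ifs with hxy
  · have hxy' : p.1 / 2 ≤ y / 2 := by linarith
    rw [integral_Ici_offspringDens hBc hBnn hx hv hdiv hxy', offspringDens, if_pos hxy',
      mul_div_cancel₀ y two_ne_zero]
    field_simp
  · rw [offspringDens, if_neg (by linarith), mul_zero]

theorem lintegral_offspringDens_half {B : ℝ → ℝ} (hBc : Continuous B) (hBnn : ∀ x, 0 ≤ B x)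
    (hdiv : ∀ x > 0, ∫⁻ s in Ioi (x / 2), ENNReal.ofReal (B (2 * s) / s) = ⊤)
    {ν : Measure (ℝ × ℝ)} (hν : ∀ᵐ p ∂ν, 0 < p.1 ∧ 0 < p.2) {y : ℝ} (hy : 0 < y)
    (hW : Integrable (survivalWeight B y) ν) :
    ∫⁻ p, ENNReal.ofReal (offspringDens B p.1 p.2 (y / 2)) ∂ν =
      ENNReal.ofReal (2 * B y / y * ∫ p, survivalWeight B y p ∂ν) := by
  have hc : 0 ≤ 2 * B y / y := by have := hBnn y; positivity
  calc ∫⁻ p, ENNReal.ofReal (offspringDens B p.1 p.2 (y / 2)) ∂ν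
      = ∫⁻ p, ENNReal.ofReal (2 * B y / y) * ENNReal.ofReal (survivalWeight B y p) ∂ν :=
        lintegral_congr_ae <| hν.mono fun p ⟨hx, hv⟩ => by
          dsimp only
          rw [offspringDens_half_eq hBc hBnn hy hx hv (hdiv _ hx), ENNReal.ofReal_mul hc]
    _ = ENNReal.ofReal (2 * B y / y) * ENNReal.ofReal (∫ p, survivalWeight B y p ∂ν) := by
        rw [lintegral_const_mul' _ _ ENNReal.ofReal_ne_top, ofReal_integral_eq_lintegral_ofReal hW
          (hν.mono fun p hp => survivalWeight_nonneg hBnn hy.le hp.2.le)]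
    _ = _ := (ENNReal.ofReal_mul hc).symm

theorem division_rate_recovery_general
    (B : ℝ → ℝ) (hBc : Continuous B) (hBnn : ∀ x, 0 ≤ B x)
    (hdiv : ∀ x > 0, ∫⁻ s in Set.Ioi (x / 2), ENNReal.ofReal (B (2 * s) / s) = ⊤)
    (E : Set ℝ) (hEpos : E ⊆ Set.Ioi 0)
    (ρ : ℝ → Measure ℝ) (hρ : ∀ v ∈ E, IsProbabilityMeasure (ρ v))
    (ν : Measure (ℝ × ℝ)) (hνp : IsProbabilityMeasure ν)
    (hsupp : ν ((Set.Ioi 0 ×ˢ E)ᶜ) = 0)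
    (νm : ℝ → ℝ) (hνm : Measurable νm) (hνmnn : ∀ y, 0 ≤ νm y)
    (hmarg : ν.map Prod.fst
        = (volume.restrict (Set.Ioi 0)).withDensity fun y => ENNReal.ofReal (νm y))
    (hinv : ∀ f : ℝ × ℝ → ℝ≥0∞, Measurable f →
      ∫⁻ p, f p ∂ν =
        ∫⁻ p, (∫⁻ x' in Set.Ioi (0 : ℝ),
          (∫⁻ v', f (x', v') ∂(ρ p.2)) * ENNReal.ofReal (offspringDens B p.1 p.2 x')) ∂ν) :
    ∀ᵐ y ∂(volume.restrict (Set.Ioi 0)),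
      0 < (∫ p, (if p.1 ≤ y then
                  (1 / p.2) * ∫ x' in Set.Ici (y / 2), offspringDens B p.1 p.2 x'
                 else 0) ∂ν) →
        B y = (y / 2) * νm (y / 2) /
          ∫ p, (if p.1 ≤ y then
                  (1 / p.2) * ∫ x' in Set.Ici (y / 2), offspringDens B p.1 p.2 x'
                else 0) ∂ν := by
  have hνE : ∀ᵐ p ∂ν, p ∈ Ioi 0 ×ˢ E := mem_ae_iff.2 hsupp
  have hk : Measurable fun q : (ℝ × ℝ) × ℝ => ENNReal.ofReal (offspringDens B q.1.1 q.1.2 q.2) :=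
    ENNReal.measurable_ofReal.comp (measurable_offspringDens hBc.measurable)
  have hνm_eq : ∀ᵐ y ∂volume.restrict (Ioi 0), ENNReal.ofReal (νm (y / 2)) =
      ∫⁻ p, ENNReal.ofReal (offspringDens B p.1 p.2 (y / 2)) ∂ν :=
    ae_restrict_Ioi_zero_div two_pos <| (withDensity_eq_iff_of_sigmaFinite
      (ENNReal.measurable_ofReal.comp hνm).aemeasurable hk.lintegral_prod_left'.aemeasurable).1 <|
      hmarg.symm.trans <| map_fst_eq_withDensity_of_invariant
        (hνE.mono fun p hp => (hρ _ hp.2).measure_univ) hk hinv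
  filter_upwards [hνm_eq, ae_restrict_mem measurableSet_Ioi] with y hνy (hy : 0 < y) hpos
  change 0 < ∫ p, survivalWeight B y p ∂ν at hpos
  change B y = y / 2 * νm (y / 2) / ∫ p, survivalWeight B y p ∂ν
  have hνm_half : νm (y / 2) = 2 * B y / y * ∫ p, survivalWeight B y p ∂ν := by
    refine (ENNReal.ofReal_eq_ofReal_iff (hνmnn _) (by have := hBnn y; positivity)).1 ?_
    -- a non-integrable weight would have Bochner integral `0`, so `hpos` forces integrability
    exact hνy.trans <| lintegral_offspringDens_half hBc hBnn hdiv
      (hνE.mono fun p hp => ⟨hp.1, hEpos hp.2⟩) hy (Integrable.of_integral_ne_zero hpos.ne')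
  rw [hνm_half]
  field_simp

/-- Recovery of the division rate from the invariant measure:
`B(y) = (y/2) ν(y/2) / E_ν[(1/τ₀) 1_{ξ₀ ≤ y, ξ₁ ≥ y/2}]` for a.e. `y > 0`
with positive denominator. -/
theorem division_rate_recovery
    (B : ℝ → ℝ) (hBc : Continuous B) (hBnn : ∀ x, 0 ≤ B x) (hB0 : B 0 = 0)
    (hdiv : ∀ x > 0, ∫⁻ s in Set.Ioi (x / 2), ENNReal.ofReal (B (2 * s) / s) = ⊤)
    (E : Set ℝ) (hE : IsCompact E) (hEpos : E ⊆ Set.Ioi 0)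
    (ρ : ℝ → Measure ℝ) (hρ : ∀ v ∈ E, IsProbabilityMeasure (ρ v))
    (hρE : ∀ v ∈ E, ρ v E = 1)
    (ν : Measure (ℝ × ℝ)) (hνp : IsProbabilityMeasure ν)
    (hsupp : ν ((Set.Ioi 0 ×ˢ E)ᶜ) = 0)
    (νm : ℝ → ℝ) (hνm : Measurable νm) (hνmnn : ∀ y, 0 ≤ νm y)
    (hmarg : ν.map Prod.fst
        = (volume.restrict (Set.Ioi 0)).withDensity fun y => ENNReal.ofReal (νm y))
    (hinv : ∀ f : ℝ × ℝ → ℝ≥0∞, Measurable f →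
      ∫⁻ p, f p ∂ν =
        ∫⁻ p, (∫⁻ x' in Set.Ioi (0 : ℝ),
          (∫⁻ v', f (x', v') ∂(ρ p.2)) * ENNReal.ofReal (offspringDens B p.1 p.2 x')) ∂ν) :
    ∀ᵐ y ∂(volume.restrict (Set.Ioi 0)),
      0 < (∫ p, (if p.1 ≤ y then
                  (1 / p.2) * ∫ x' in Set.Ici (y / 2), offspringDens B p.1 p.2 x'
                 else 0) ∂ν) →
        B y = (y / 2) * νm (y / 2) /
          ∫ p, (if p.1 ≤ y then
                  (1 / p.2) * ∫ x' in Set.Ici (y / 2), offspringDens B p.1 p.2 x'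
                else 0) ∂ν :=
  division_rate_recovery_general B hBc hBnn hdiv E hEpos ρ hρ ν hνp hsupp νm hνm hνmnn hmarg hinv
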